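/- For every n ≥ 0 and every word v of length n over {a,b}: |ψ(v)| ≤ |ψ(v^(n))| = F_{n+1} − 2, with equality if and only if v = v^(n) or v = E(v^(n)). -/

import Mathlib

def palClosure (w : List Bool) : List Bool :=
  let k := Nat.find (p := fun k => (w.drop k).reverse = w.drop k)
    ⟨w.length, by simp⟩
  w.take k ++ w.drop k ++ (w.take k).reverse

def psi (v : List Bool) : List Bool := v.foldl (fun w x => palClosure (w ++ [x])) []

def E (v : List Bool) : List Bool := v.map (!·)

def mu (x : Bool) (w : List Bool) : List Bool := w.flatMap (fun y => if y = x then [x] else [x, y])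

def muW : List Bool → List Bool → List Bool
  | [], w => w
  | x :: v, w => mu x (muW v w)

def vN (n : ℕ) : List Bool := (List.range n).map (fun i => decide (i % 2 = 1))

def fibF : ℕ → ℕ
  | 0 => 1
  | 1 => 1
  | n + 2 => fibF (n + 1) + fibF n

def HasPeriod (w : List Bool) (p : ℕ) : Prop :=
  0 < p ∧ ∀ i j (hi : i < w.length) (hj : j < w.length),
    i % p = j % p → w.get ⟨i, hi⟩ = w.get ⟨j, hj⟩

noncomputable def minPeriod (w : List Bool) : ℕ := sInf {p | HasPeriod w p}

def dOp : List Bool → List Bool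
  | x :: y :: u => y :: x :: u
  | w => w

def cOp (v : List Bool) : List Bool := (dOp v.reverse).reverse

def contAux : List ℕ → ℕ
  | [] => 1
  | [a] => a
  | a :: b :: t => a * contAux (b :: t) + contAux t

/-! The palindromic prefixes of `ψ(v)` are the words `ψ(u)` for the prefixes `u` of `v`, so the
palindromic suffixes of `ψ(v) x` longer than `x` are the words `x ψ(u) x` with `u x` a prefix of
`v`. Hence (Justin's formula) `|ψ(v x)| = 2 |ψ(v)| - |ψ(u)|` for the longest such `u`, and
`|ψ(v x)| = 2 |ψ(v)| + 1` if `x` does not occur in `v`. It follows that `|ψ(v)| + 2 = p + q` for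
the pair `(p, q)` that starts at `(1, 1)` and becomes `(p, p + q)` on reading `a = false` and
`(p + q, q)` on reading `b = true`. A step keeps one entry and adds it to the old sum, so the sum
grows at most like the Fibonacci numbers, with equality exactly when each step keeps the larger
entry, that is, when the letters alternate. -/

theorem E_E (v : List Bool) : E (E v) = v := by simp [E, Function.comp_def]

theorem E_append_singleton (v : List Bool) (x : Bool) : E (v ++ [x]) = E v ++ [!x] := by
  simp [E]

theorem vN_succ (n : ℕ) : vN (n + 1) = vN n ++ [decide (n % 2 = 1)] := by
  simp [vN, List.range_succ]

theorem fibF_eq_fib : ∀ n, fibF n = Nat.fib (n + 1)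
  | 0 => rfl
  | 1 => rfl
  | n + 2 => by
    rw [fibF, fibF_eq_fib (n + 1), fibF_eq_fib n, Nat.fib_add_two (n := n + 1), add_comm]

theorem exists_drop_reverse_eq (w : List Bool) : ∃ k, (w.drop k).reverse = w.drop k :=
  ⟨w.length, by simp⟩

def palSuffixStart (w : List Bool) : ℕ := Nat.find (exists_drop_reverse_eq w)

theorem palSuffixStart_le (w : List Bool) : palSuffixStart w ≤ w.length :=
  Nat.find_min' _ (by simp)

theorem palClosure_eq (w : List Bool) :
    palClosure w = w ++ (w.take (palSuffixStart w)).reverse := by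
  simp only [palClosure, palSuffixStart, List.take_append_drop]

theorem length_palClosure (w : List Bool) :
    (palClosure w).length = w.length + palSuffixStart w := by
  simp [palClosure_eq, palSuffixStart_le]

theorem prefix_palClosure (w : List Bool) : w <+: palClosure w := by
  rw [palClosure_eq]; exact List.prefix_append _ _

theorem reverse_palClosure (w : List Bool) : (palClosure w).reverse = palClosure w := by
  set k := palSuffixStart w
  have hk : (w.drop k).reverse = w.drop k := Nat.find_spec (exists_drop_reverse_eq w)
  have hrev : w.reverse = w.drop k ++ (w.take k).reverse := by
    conv_lhs => rw [← List.take_append_drop k w]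
    rw [List.reverse_append, hk]
  rw [palClosure_eq, List.reverse_append, List.reverse_reverse, hrev, ← List.append_assoc,
    List.take_append_drop]

theorem reverse_drop_eq_of_reverse_append_eq {w t : List Bool} (ht : t.length ≤ w.length)
    (hpal : (w ++ t).reverse = w ++ t) : (w.drop t.length).reverse = w.drop t.length := by
  have hrev : w.reverse = w.drop t.length ++ t := by
    have := congrArg (List.drop t.length) hpal
    rwa [List.reverse_append, List.drop_left' (by simp),
      List.drop_append_of_le_length ht] at this
  have hw : w = t.reverse ++ (w.drop t.length).reverse := by
    simpa using congrArg List.reverse hrev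
  have := congrArg (List.drop t.length) hw
  rwa [List.drop_left' (by simp), eq_comm] at this

theorem eq_palClosure_of_prefix {w Q : List Bool} (hwQ : w <+: Q) (hQ : Q <+: palClosure w)
    (hpal : Q.reverse = Q) : Q = palClosure w := by
  obtain ⟨t, rfl⟩ := hwQ
  have hlen := hQ.length_le
  rw [length_palClosure, List.length_append] at hlen
  have hk : palSuffixStart w ≤ t.length :=
    Nat.find_min' _ (reverse_drop_eq_of_reverse_append_eq (by grind [palSuffixStart_le]) hpal)
  exact hQ.eq_of_length (by simp only [List.length_append, length_palClosure]; omega)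

theorem length_palClosure_add_of_longest {w s : List Bool} (hs : s <:+ w)
    (hpal : s.reverse = s) (hmax : ∀ t, t <:+ w → t.reverse = t → t.length ≤ s.length) :
    (palClosure w).length + s.length = 2 * w.length := by
  have hdrop : w.drop (w.length - s.length) = s := by
    obtain ⟨p, rfl⟩ := hs
    simp
  have hle : palSuffixStart w ≤ w.length - s.length :=
    Nat.find_min' _ (by rw [hdrop, hpal])
  have hge : w.length - palSuffixStart w ≤ s.length := by
    simpa [palSuffixStart] using
      hmax _ (List.drop_suffix _ w) (Nat.find_spec (exists_drop_reverse_eq w))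
  have := hs.length_le
  rw [length_palClosure]
  omega

theorem psi_append_singleton (v : List Bool) (x : Bool) :
    psi (v ++ [x]) = palClosure (psi v ++ [x]) := by
  simp [psi, List.foldl_append]

theorem reverse_psi (v : List Bool) : (psi v).reverse = psi v := by
  induction v using List.reverseRecOn with
  | nil => rfl
  | append_singleton v x _ => rw [psi_append_singleton]; exact reverse_palClosure _

theorem prefix_psi_append_singleton (v : List Bool) (x : Bool) :
    psi v ++ [x] <+: psi (v ++ [x]) := by
  rw [psi_append_singleton]; exact prefix_palClosure _

theorem psi_prefix_psi {u v : List Bool} (h : u <+: v) : psi u <+: psi v := by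
  induction v using List.reverseRecOn with
  | nil => rw [List.prefix_nil.mp h]
  | append_singleton v x ih =>
    rcases List.prefix_concat_iff.mp h with rfl | h
    · exact List.prefix_refl _
    · exact (ih h).trans ((List.prefix_append _ _).trans (prefix_psi_append_singleton v x))

theorem exists_eq_psi_of_prefix_psi {v Q : List Bool} (hQ : Q <+: psi v)
    (hpal : Q.reverse = Q) : ∃ u, u <+: v ∧ Q = psi u := by
  induction v using List.reverseRecOn generalizing Q with
  | nil => exact ⟨[], List.prefix_refl _, List.prefix_nil.mp hQ⟩
  | append_singleton v x ih =>
    have hvx := prefix_psi_append_singleton v x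
    by_cases hle : Q.length ≤ (psi v).length
    · obtain ⟨u, hu, rfl⟩ :=
        ih (List.prefix_of_prefix_length_le hQ ((List.prefix_append _ _).trans hvx) hle) hpal
      exact ⟨u, hu.trans (List.prefix_append _ _), rfl⟩
    · refine ⟨v ++ [x], List.prefix_refl _, ?_⟩
      rw [psi_append_singleton] at hQ ⊢
      exact eq_palClosure_of_prefix
        (List.prefix_of_prefix_length_le hvx (psi_append_singleton v x ▸ hQ) (by simp; omega))
        hQ hpal

theorem prefix_of_psi_append_singleton_prefix {u v : List Bool} {x : Bool} (hu : u <+: v)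
    (h : psi u ++ [x] <+: psi v) : u ++ [x] <+: v := by
  obtain ⟨_ | ⟨y, t⟩, rfl⟩ := hu
  · simpa using h.length_le
  · have hy : psi u ++ [y] <+: psi (u ++ y :: t) :=
      (prefix_psi_append_singleton u y).trans (psi_prefix_psi ⟨t, by simp⟩)
    obtain rfl : x = y := by
      simpa using List.prefix_of_prefix_length_le h hy (by simp)
    exact ⟨t, by simp⟩

theorem exists_eq_of_suffix_psi_append_singleton {v s : List Bool} {x : Bool}
    (hs : s <:+ psi v ++ [x]) (hpal : s.reverse = s) (hlen : 2 ≤ s.length) :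
    ∃ u, u ++ [x] <+: v ∧ s = x :: (psi u ++ [x]) := by
  have hs' : s <+: x :: psi v := by
    simpa [hpal, reverse_psi] using List.reverse_prefix.mpr hs
  rcases List.Palindrome.of_reverse_eq hpal with _ | _ | ⟨c, ht⟩
  · simp at hlen
  · simp at hlen
  obtain ⟨rfl, hts⟩ := List.cons_prefix_cons.mp hs'
  obtain ⟨u, hu, rfl⟩ := exists_eq_psi_of_prefix_psi
    ((List.prefix_append _ _).trans hts) ht.reverse_eq
  exact ⟨u, prefix_of_psi_append_singleton_prefix hu hts, rfl⟩

/-- `|ψ u| + 1` for the longest `u` such that `u x` is a prefix of `v`, and `0` if `x` does not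
occur in `v`. -/
def lastPsiLen (v : List Bool) (x : Bool) : ℕ := go v.reverse
where
  go : List Bool → ℕ
    | [] => 0
    | y :: r => if y = x then (psi r.reverse).length + 1 else go r

theorem lastPsiLen_append_singleton_self (v : List Bool) (x : Bool) :
    lastPsiLen (v ++ [x]) x = (psi v).length + 1 := by
  simp [lastPsiLen, lastPsiLen.go]

theorem lastPsiLen_append_singleton_of_ne (v : List Bool) {x y : Bool} (h : y ≠ x) :
    lastPsiLen (v ++ [y]) x = lastPsiLen v x := by
  simp [lastPsiLen, lastPsiLen.go, h]

theorem lastPsiLen_spec (v : List Bool) (x : Bool) :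
    (lastPsiLen v x = 0 ∧ ∀ u, ¬ u ++ [x] <+: v) ∨
      ∃ u, lastPsiLen v x = (psi u).length + 1 ∧ u ++ [x] <+: v ∧
        ∀ u', u' ++ [x] <+: v → u' <+: u := by
  induction v using List.reverseRecOn with
  | nil => exact Or.inl ⟨rfl, fun u h => by simpa using h.length_le⟩
  | append_singleton v y ih =>
    by_cases hyx : y = x
    · subst hyx
      refine Or.inr ⟨v, lastPsiLen_append_singleton_self v y, List.prefix_refl _,
        fun u' h => ?_⟩
      rcases List.prefix_concat_iff.mp h with h | h
      · exact (List.append_inj_left' h rfl) ▸ List.prefix_refl _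
      · exact (List.prefix_append _ _).trans h
    · rw [lastPsiLen_append_singleton_of_ne v hyx]
      have hocc : ∀ u, u ++ [x] <+: v ++ [y] → u ++ [x] <+: v := fun u h =>
        (List.prefix_concat_iff.mp h).resolve_left
          fun he => hyx (List.singleton_inj.mp (List.append_inj' he rfl).2).symm
      rcases ih with ⟨h0, hfree⟩ | ⟨u, hm, hu, hmax⟩
      · exact Or.inl ⟨h0, fun u h => hfree u (hocc u h)⟩
      · exact Or.inr ⟨u, hm, hu.trans (List.prefix_append _ _),
          fun u' h => hmax u' (hocc u' h)⟩

/-- Justin's formula for the length of an iterated palindromic closure. -/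
theorem length_psi_append_singleton (v : List Bool) (x : Bool) :
    (psi (v ++ [x])).length + lastPsiLen v x = 2 * (psi v).length + 1 := by
  rw [psi_append_singleton]
  rcases lastPsiLen_spec v x with ⟨h0, hfree⟩ | ⟨u, hm, hu, hmax⟩
  · have := length_palClosure_add_of_longest (w := psi v ++ [x]) (s := [x]) (by simp) rfl
      fun t ht htpal => by
        by_contra! hlen
        obtain ⟨u, hu, -⟩ := exists_eq_of_suffix_psi_append_singleton ht htpal hlen
        exact hfree u hu
    simp only [List.length_append, List.length_singleton] at this
    omega
  · have hsuf : x :: psi u <:+ psi v := by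
      simpa [reverse_psi] using List.reverse_suffix.mpr
        ((prefix_psi_append_singleton u x).trans (psi_prefix_psi hu))
    have := length_palClosure_add_of_longest (w := psi v ++ [x]) (s := x :: (psi u ++ [x]))
      (by simpa using List.suffix_append_self_iff.mpr hsuf) (by simp [reverse_psi])
      fun t ht htpal => by
        by_cases hlen : t.length < 2
        · simp; omega
        obtain ⟨u', hu', rfl⟩ :=
          exists_eq_of_suffix_psi_append_singleton ht htpal (by omega)
        simpa using (psi_prefix_psi (hmax u' hu')).length_le
    simp only [List.length_append, List.length_cons, List.length_nil] at this
    omega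

def periodStep : ℕ × ℕ → Bool → ℕ × ℕ
  | (p, q), true => (p + q, q)
  | (p, q), false => (p, p + q)

/-- The two periods `(p, q)` of the central word `ψ v`. -/
def periodPair (v : List Bool) : ℕ × ℕ := v.foldl periodStep (1, 1)

theorem periodPair_append_singleton (v : List Bool) (x : Bool) :
    periodPair (v ++ [x]) = periodStep (periodPair v) x := by
  simp [periodPair, List.foldl_append]

theorem periodPair_spec (v : List Bool) :
    (psi v).length + 2 = (periodPair v).1 + (periodPair v).2 ∧
    (periodPair v).1 + lastPsiLen v false = (psi v).length + 1 ∧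
    (periodPair v).2 + lastPsiLen v true = (psi v).length + 1 := by
  induction v using List.reverseRecOn with
  | nil => exact ⟨rfl, rfl, rfl⟩
  | append_singleton v x ih =>
    have := length_psi_append_singleton v x
    rw [periodPair_append_singleton]
    cases x <;>
      rw [lastPsiLen_append_singleton_self, lastPsiLen_append_singleton_of_ne v (by decide)] <;>
      simp only [periodStep] <;> omega

theorem length_psi_add_two (v : List Bool) :
    (psi v).length + 2 = (periodPair v).1 + (periodPair v).2 :=
  (periodPair_spec v).1

theorem periodPair_E (v : List Bool) : periodPair (E v) = (periodPair v).swap := by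
  induction v using List.reverseRecOn with
  | nil => rfl
  | append_singleton v x ih =>
    rw [E_append_singleton, periodPair_append_singleton, periodPair_append_singleton, ih]
    cases x <;> simp [periodStep, add_comm]

theorem periodPair_vN (n : ℕ) :
    periodPair (vN n) = if n % 2 = 0 then (Nat.fib (n + 2), Nat.fib (n + 1))
      else (Nat.fib (n + 1), Nat.fib (n + 2)) := by
  induction n with
  | zero => rfl
  | succ n ih =>
    have hfib : Nat.fib (n + 3) = Nat.fib (n + 1) + Nat.fib (n + 2) := Nat.fib_add_two
    rw [vN_succ, periodPair_append_singleton, ih]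
    rcases Nat.mod_two_eq_zero_or_one n with h | h
    · simp [h, Nat.succ_mod_two_eq_zero_iff, periodStep, hfib, Nat.add_comm (Nat.fib (n + 1))]
    · simp [h, Nat.succ_mod_two_eq_zero_iff, periodStep, hfib]

theorem sum_periodPair_vN (n : ℕ) :
    (periodPair (vN n)).1 + (periodPair (vN n)).2 = Nat.fib (n + 3) := by
  have hfib : Nat.fib (n + 3) = Nat.fib (n + 1) + Nat.fib (n + 2) := Nat.fib_add_two
  rw [periodPair_vN]
  split_ifs <;> omega

theorem periodPair_le (v : List Bool) :
    (periodPair v).1 ≤ Nat.fib (v.length + 2) ∧ (periodPair v).2 ≤ Nat.fib (v.length + 2) ∧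
      (periodPair v).1 + (periodPair v).2 ≤ Nat.fib (v.length + 3) := by
  induction v using List.reverseRecOn with
  | nil => decide
  | append_singleton v x ih =>
    have h3 : Nat.fib (v.length + 3) = Nat.fib (v.length + 1) + Nat.fib (v.length + 2) :=
      Nat.fib_add_two
    have h4 : Nat.fib (v.length + 4) = Nat.fib (v.length + 2) + Nat.fib (v.length + 3) :=
      Nat.fib_add_two
    rw [periodPair_append_singleton, List.length_append, List.length_singleton]
    cases x <;> simp only [periodStep, Nat.add_assoc, Nat.reduceAdd] <;> omega

theorem vN_append_singleton_of_sum_eq (n : ℕ) (x : Bool)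
    (h : (periodPair (vN n ++ [x])).1 + (periodPair (vN n ++ [x])).2 = Nat.fib (n + 4)) :
    vN n ++ [x] = vN (n + 1) ∨ vN n ++ [x] = E (vN (n + 1)) := by
  rcases Nat.eq_zero_or_pos n with rfl | hn
  · cases x <;> decide
  have hlt : Nat.fib (n + 1) < Nat.fib (n + 2) := Nat.fib_lt_fib_succ (by omega)
  have hfib : Nat.fib (n + 4) = Nat.fib (n + 2) + Nat.fib (n + 3) := Nat.fib_add_two
  have hfib' : Nat.fib (n + 3) = Nat.fib (n + 1) + Nat.fib (n + 2) := Nat.fib_add_two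
  left
  rw [vN_succ]
  rw [periodPair_append_singleton, periodPair_vN] at h
  rcases Nat.mod_two_eq_zero_or_one n with hpar | hpar <;> cases x <;>
    simp [hpar, periodStep] at h ⊢ <;> omega

theorem eq_vN_or_eq_E_vN_of_sum_eq {v : List Bool}
    (h : (periodPair v).1 + (periodPair v).2 = Nat.fib (v.length + 3)) :
    v = vN v.length ∨ v = E (vN v.length) := by
  induction v using List.reverseRecOn with
  | nil => exact Or.inl rfl
  | append_singleton v x ih =>
    have hbound := periodPair_le v
    have hfib : Nat.fib (v.length + 1 + 3) = Nat.fib (v.length + 2) + Nat.fib (v.length + 3) :=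
      Nat.fib_add_two
    rw [List.length_append, List.length_singleton] at h ⊢
    have hv : (periodPair v).1 + (periodPair v).2 = Nat.fib (v.length + 3) := by
      rw [periodPair_append_singleton] at h
      cases x <;> simp only [periodStep] at h <;> omega
    generalize v.length = n at *
    rcases ih hv with rfl | rfl
    · exact vN_append_singleton_of_sum_eq n x h
    · have hw : vN n ++ [!x] = E (E (vN n) ++ [x]) := by rw [E_append_singleton, E_E]
      have hsum := h
      rw [← Prod.fst_swap, ← Prod.snd_swap, ← periodPair_E, ← hw, add_comm] at hsum
      rcases vN_append_singleton_of_sum_eq n (!x) hsum with hE | hE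
      · right; rw [← hE, E_append_singleton, Bool.not_not]
      · left; rw [← E_E (vN (n + 1)), ← hE, E_append_singleton, Bool.not_not]

theorem stmt10 (n : ℕ) (v : List Bool) (hv : v.length = n) :
    (psi v).length ≤ (psi (vN n)).length ∧
    (psi (vN n)).length = fibF (n + 2) - 2 ∧
    ((psi v).length = (psi (vN n)).length ↔ v = vN n ∨ v = E (vN n)) := by
  have hψ := length_psi_add_two v
  have hψN := length_psi_add_two (vN n)
  have hN := sum_periodPair_vN n
  have hbound := (periodPair_le v).2.2
  rw [hv] at hbound
  have hfibF : fibF (n + 2) = Nat.fib (n + 3) := fibF_eq_fib (n + 2)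
  refine ⟨by omega, by omega, fun h => ?_, ?_⟩
  · subst hv
    exact eq_vN_or_eq_E_vN_of_sum_eq (by omega)
  · rintro (rfl | rfl)
    · rfl
    · have hψE := length_psi_add_two (E (vN n))
      rw [periodPair_E, Prod.fst_swap, Prod.snd_swap] at hψE
      omega
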